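/- Let k, m be positive integers with m ≥ 1 and let φ(τ,z₁,z₂) = Σ_{α,β ≥ 0} χ_{α,β}(τ) z₁^α z₂^β be holomorphic on ℍ × ℂ² with φ|_{k,m} M = φ for all M ∈ SL(2,ℤ). Then the diagonal part φ₀(τ,z₁,z₂) = Σ_{ν ≥ 0} χ_{ν,ν}(τ) (z₁z₂)^ν also satisfies φ₀|_{k,m} M = φ₀ for all M ∈ SL(2,ℤ); in particular, χ_{0,0} is a modular form of weight k for SL(2,ℤ). -/

import Mathlib

/-!
Averaging `(z, w) ↦ φ(τ, ζⁱz, ζ⁻ⁱw)` over the powers of a primitive `N`-th root of unity `ζ`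
keeps exactly the coefficients `χ_{α,β}` with `N ∣ α - β`; as `N → ∞` these averages tend to the
diagonal part `φ₀` by dominated convergence. The slash action commutes with each rotation, because
its exponential factor only sees the product `z₁z₂`, and with pointwise limits, so `φ₀` inherits the
invariance of `φ`. At `z₁ = z₂ = 0` the invariance of `φ₀` is the modularity of `χ_{0,0}`.
-/

open Complex

noncomputable def hermSlashZ (k m : ℤ) (M : Matrix.SpecialLinearGroup (Fin 2) ℤ)
    (φ : ℂ → ℂ → ℂ → ℂ) : ℂ → ℂ → ℂ → ℂ :=
  fun τ z₁ z₂ =>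
    ((M 1 0 : ℤ) * τ + (M 1 1 : ℤ)) ^ (-k) *
      Complex.exp (-2 * Real.pi * Complex.I * m * (M 1 0 : ℤ) * z₁ * z₂ /
        ((M 1 0 : ℤ) * τ + (M 1 1 : ℤ))) *
      φ (((M 0 0 : ℤ) * τ + (M 0 1 : ℤ)) / ((M 1 0 : ℤ) * τ + (M 1 1 : ℤ)))
        (z₁ / ((M 1 0 : ℤ) * τ + (M 1 1 : ℤ)))
        (z₂ / ((M 1 0 : ℤ) * τ + (M 1 1 : ℤ)))

open Filter Finset Topology Real

theorem IsPrimitiveRoot.geom_sum_zpow {K : Type*} [Field K] {ζ : K} {N : ℕ}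
    (hζ : IsPrimitiveRoot ζ N) (n : ℤ) :
    ∑ i ∈ range N, (ζ ^ n) ^ i = if (N : ℤ) ∣ n then (N : K) else 0 := by
  split_ifs with h
  · simp [(hζ.zpow_eq_one_iff_dvd n).mpr h]
  · rw [geom_sum_eq ((hζ.zpow_eq_one_iff_dvd n).not.mpr h), ← zpow_natCast, ← zpow_mul,
      mul_comm, zpow_mul, zpow_natCast, hζ.pow_eq_one, one_zpow, sub_self, zero_div]

theorem pow_mul_inv_pow_eq_zpow_sub {K : Type*} [Field K] {u : K} (hu : u ≠ 0) (i α β : ℕ) :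
    (u ^ i) ^ α * ((u ^ i)⁻¹) ^ β = (u ^ ((α : ℤ) - β)) ^ i := by
  rw [← zpow_natCast (u ^ ((α : ℤ) - β)) i, ← zpow_mul, sub_mul, zpow_sub₀ hu, div_eq_mul_inv]
  norm_cast
  ring

noncomputable def rotationAverage (ζ : ℂ) (N : ℕ) (g : ℂ → ℂ → ℂ) (z w : ℂ) : ℂ :=
  (N : ℂ)⁻¹ * ∑ i ∈ range N, g (ζ ^ i * z) ((ζ ^ i)⁻¹ * w)

theorem hasSum_rotationAverage {a : ℕ → ℕ → ℂ} {g : ℂ → ℂ → ℂ}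
    (hg : ∀ z w, HasSum (fun p : ℕ × ℕ => a p.1 p.2 * z ^ p.1 * w ^ p.2) (g z w))
    {ζ : ℂ} {N : ℕ} (hζ : IsPrimitiveRoot ζ N) (hN : N ≠ 0) (z w : ℂ) :
    HasSum (fun p : ℕ × ℕ =>
        if (N : ℤ) ∣ (p.1 : ℤ) - p.2 then a p.1 p.2 * z ^ p.1 * w ^ p.2 else 0)
      (rotationAverage ζ N g z w) := by
  have hrot : ∀ i ∈ range N, HasSum (fun p : ℕ × ℕ =>
      a p.1 p.2 * z ^ p.1 * w ^ p.2 * (ζ ^ ((p.1 : ℤ) - p.2)) ^ i)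
      (g (ζ ^ i * z) ((ζ ^ i)⁻¹ * w)) := fun i _ => by
    convert hg (ζ ^ i * z) ((ζ ^ i)⁻¹ * w) using 2 with p
    rw [← pow_mul_inv_pow_eq_zpow_sub (hζ.ne_zero hN)]
    ring
  refine ((hasSum_sum hrot).mul_left (N : ℂ)⁻¹).congr_fun fun p => ?_
  rw [← mul_sum, hζ.geom_sum_zpow]
  split_ifs
  · field_simp
  · simp

theorem tendsto_tsum_ite_dvd_sub {E : Type*} [NormedAddCommGroup E] [CompleteSpace E]
    {f : ℕ × ℕ → E} (hf : Summable (‖f ·‖)) :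
    Tendsto (fun N : ℕ => ∑' p : ℕ × ℕ, if (N : ℤ) ∣ (p.1 : ℤ) - p.2 then f p else 0) atTop
      (𝓝 (∑' ν, f (ν, ν))) := by
  have hdiag : ∑' p : ℕ × ℕ, (if p.1 = p.2 then f p else 0) = ∑' ν, f (ν, ν) := by
    have hinj : Function.Injective fun ν : ℕ => (ν, ν) := fun a b h => congrArg Prod.fst h
    rw [← hinj.tsum_eq]
    · simp
    · intro p hp
      exact ⟨p.1, Prod.ext rfl (of_not_not fun h => hp (if_neg h))⟩
  rw [← hdiag]
  refine tendsto_tsum_of_dominated_convergence hf (fun p => ?_) ?_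
  · refine tendsto_const_nhds.congr' ?_
    filter_upwards [eventually_gt_atTop ((p.1 : ℤ) - p.2).natAbs] with N hN
    have hdvd : (N : ℤ) ∣ (p.1 : ℤ) - p.2 ↔ p.1 = p.2 := by
      refine ⟨fun h => ?_, fun h => by simp [h]⟩
      have := Int.eq_zero_of_dvd_of_natAbs_lt_natAbs h (by simpa using hN)
      omega
    simp only [hdvd]
  · exact Eventually.of_forall fun N p => by split_ifs <;> simp

theorem tendsto_rotationAverage {a : ℕ → ℕ → ℂ} {g : ℂ → ℂ → ℂ}
    (hg : ∀ z w, HasSum (fun p : ℕ × ℕ => a p.1 p.2 * z ^ p.1 * w ^ p.2) (g z w)) (z w : ℂ) :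
    Tendsto (fun N : ℕ => rotationAverage (exp (2 * π * I / N)) N g z w) atTop
      (𝓝 (∑' ν, a ν ν * (z * w) ^ ν)) := by
  have h := tendsto_tsum_ite_dvd_sub (hg z w).summable.norm
  simp_rw [mul_pow, ← mul_assoc]
  refine h.congr' ?_
  filter_upwards [eventually_ne_atTop 0] with N hN
  exact (hasSum_rotationAverage hg (isPrimitiveRoot_exp N hN) hN z w).tsum_eq

theorem im_moebius_pos (M : Matrix.SpecialLinearGroup (Fin 2) ℤ) {τ : ℂ} (hτ : 0 < τ.im) :
    0 < ((((M 0 0 : ℤ) : ℂ) * τ + (M 0 1 : ℤ)) / ((M 1 0 : ℤ) * τ + (M 1 1 : ℤ))).im := by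
  have h := (M • (⟨τ, hτ⟩ : UpperHalfPlane)).im_pos
  rw [UpperHalfPlane.im, UpperHalfPlane.coe_specialLinearGroup_apply] at h
  simpa using h

theorem moebius_denom_ne_zero (M : Matrix.SpecialLinearGroup (Fin 2) ℤ) {τ : ℂ}
    (hτ : 0 < τ.im) : ((M 1 0 : ℤ) : ℂ) * τ + (M 1 1 : ℤ) ≠ 0 := by
  intro h
  simpa [h] using im_moebius_pos M hτ

theorem tendsto_hermSlashZ {ι : Type*} {l : Filter ι} (k m : ℤ)
    (M : Matrix.SpecialLinearGroup (Fin 2) ℤ) {F : ι → ℂ → ℂ → ℂ → ℂ} {G : ℂ → ℂ → ℂ → ℂ}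
    (hF : ∀ τ z w, 0 < τ.im → Tendsto (fun n => F n τ z w) l (𝓝 (G τ z w)))
    {τ : ℂ} (hτ : 0 < τ.im) (z w : ℂ) :
    Tendsto (fun n => hermSlashZ k m M (F n) τ z w) l (𝓝 (hermSlashZ k m M G τ z w)) :=
  (hF _ _ _ (im_moebius_pos M hτ)).const_mul _

theorem hermSlashZ_rotationAverage (k m : ℤ) (M : Matrix.SpecialLinearGroup (Fin 2) ℤ)
    (φ : ℂ → ℂ → ℂ → ℂ) {ζ : ℂ} (hζ : ζ ≠ 0) (N : ℕ) (τ z w : ℂ) :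
    hermSlashZ k m M (fun τ' => rotationAverage ζ N (φ τ')) τ z w =
      rotationAverage ζ N (hermSlashZ k m M φ τ) z w := by
  simp only [hermSlashZ, rotationAverage, mul_sum]
  refine sum_congr rfl fun i _ => ?_
  have hζi : ζ ^ i ≠ 0 := pow_ne_zero i hζ
  rw [mul_div_assoc (ζ ^ i) z, mul_div_assoc (ζ ^ i)⁻¹ w,
    show ∀ c : ℂ, c * (ζ ^ i * z) * ((ζ ^ i)⁻¹ * w) = c * z * w from fun c => by field_simp]
  ring

theorem hermSlashZ_apply_zero_zero (k m : ℤ) (M : Matrix.SpecialLinearGroup (Fin 2) ℤ)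
    (F : ℂ → ℂ → ℂ → ℂ) (τ : ℂ) :
    hermSlashZ k m M F τ 0 0 = ((M 1 0 : ℤ) * τ + (M 1 1 : ℤ)) ^ (-k) *
      F (((M 0 0 : ℤ) * τ + (M 0 1 : ℤ)) / ((M 1 0 : ℤ) * τ + (M 1 1 : ℤ))) 0 0 := by
  simp [hermSlashZ]

theorem diagonal_part_invariant_general (k m : ℕ)
    (χ : ℕ → ℕ → ℂ → ℂ) (φ : ℂ → ℂ → ℂ → ℂ)
    (hφ : ∀ τ z₁ z₂ : ℂ, 0 < τ.im →
      HasSum (fun p : ℕ × ℕ => χ p.1 p.2 τ * z₁ ^ p.1 * z₂ ^ p.2) (φ τ z₁ z₂))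
    (hinv : ∀ M : Matrix.SpecialLinearGroup (Fin 2) ℤ,
      ∀ τ z₁ z₂ : ℂ, 0 < τ.im → hermSlashZ k m M φ τ z₁ z₂ = φ τ z₁ z₂) :
    (∀ M : Matrix.SpecialLinearGroup (Fin 2) ℤ, ∀ τ z₁ z₂ : ℂ, 0 < τ.im →
      hermSlashZ k m M (fun τ' z₁' z₂' => ∑' ν : ℕ, χ ν ν τ' * (z₁' * z₂') ^ ν) τ z₁ z₂ =
        ∑' ν : ℕ, χ ν ν τ * (z₁ * z₂) ^ ν) ∧
    (∀ M : Matrix.SpecialLinearGroup (Fin 2) ℤ, ∀ τ : ℂ, 0 < τ.im →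
      χ 0 0 (((M 0 0 : ℤ) * τ + (M 0 1 : ℤ)) / ((M 1 0 : ℤ) * τ + (M 1 1 : ℤ))) =
        ((M 1 0 : ℤ) * τ + (M 1 1 : ℤ)) ^ (k : ℕ) * χ 0 0 τ) := by
  have hlim : ∀ τ z w : ℂ, 0 < τ.im →
      Tendsto (fun N : ℕ => rotationAverage (exp (2 * π * I / N)) N (φ τ) z w) atTop
        (𝓝 (∑' ν : ℕ, χ ν ν τ * (z * w) ^ ν)) :=
    fun τ z w hτ => tendsto_rotationAverage (a := fun α β => χ α β τ) (hφ τ · · hτ) z w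
  have hdiag : ∀ M : Matrix.SpecialLinearGroup (Fin 2) ℤ, ∀ τ z₁ z₂ : ℂ, 0 < τ.im →
      hermSlashZ k m M (fun τ' z₁' z₂' => ∑' ν : ℕ, χ ν ν τ' * (z₁' * z₂') ^ ν) τ z₁ z₂ =
        ∑' ν : ℕ, χ ν ν τ * (z₁ * z₂) ^ ν := by
    intro M τ z₁ z₂ hτ
    have hslash := tendsto_hermSlashZ k m M
      (F := fun (N : ℕ) τ' => rotationAverage (exp (2 * π * I / N)) N (φ τ')) hlim hτ z₁ z₂
    refine tendsto_nhds_unique (hslash.congr fun N => ?_) (hlim τ z₁ z₂ hτ)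
    have hφτ : hermSlashZ k m M φ τ = φ τ := funext₂ fun z w => hinv M τ z w hτ
    rw [hermSlashZ_rotationAverage k m M φ (exp_ne_zero _), hφτ]
  refine ⟨hdiag, fun M τ hτ => ?_⟩
  have h := hdiag M τ 0 0 hτ
  simp only [hermSlashZ_apply_zero_zero, mul_zero, zero_pow_eq, mul_ite, mul_one,
    tsum_ite_eq] at h
  rwa [zpow_neg, zpow_natCast, inv_mul_eq_iff_eq_mul₀ (pow_ne_zero _ (moebius_denom_ne_zero M hτ))]
    at h

theorem diagonal_part_invariant (k m : ℕ) (hk : 0 < k) (hm : 1 ≤ m)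
    (χ : ℕ → ℕ → ℂ → ℂ) (φ : ℂ → ℂ → ℂ → ℂ)
    (hφ : ∀ τ z₁ z₂ : ℂ, 0 < τ.im →
      HasSum (fun p : ℕ × ℕ => χ p.1 p.2 τ * z₁ ^ p.1 * z₂ ^ p.2) (φ τ z₁ z₂))
    (hinv : ∀ M : Matrix.SpecialLinearGroup (Fin 2) ℤ,
      ∀ τ z₁ z₂ : ℂ, 0 < τ.im → hermSlashZ k m M φ τ z₁ z₂ = φ τ z₁ z₂) :
    (∀ M : Matrix.SpecialLinearGroup (Fin 2) ℤ, ∀ τ z₁ z₂ : ℂ, 0 < τ.im →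
      hermSlashZ k m M (fun τ' z₁' z₂' => ∑' ν : ℕ, χ ν ν τ' * (z₁' * z₂') ^ ν) τ z₁ z₂ =
        ∑' ν : ℕ, χ ν ν τ * (z₁ * z₂) ^ ν) ∧
    (∀ M : Matrix.SpecialLinearGroup (Fin 2) ℤ, ∀ τ : ℂ, 0 < τ.im →
      χ 0 0 (((M 0 0 : ℤ) * τ + (M 0 1 : ℤ)) / ((M 1 0 : ℤ) * τ + (M 1 1 : ℤ))) =
        ((M 1 0 : ℤ) * τ + (M 1 1 : ℤ)) ^ (k : ℕ) * χ 0 0 τ) :=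
  diagonal_part_invariant_general k m χ φ hφ hinv
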